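/- Let a > b be integers and k an integer. In the hexagonal grid, the distance from the vertex (k,a) to the horizontal line L_b = {(x,b) : x ∈ ℤ} equals 2(a−b) if a+k is even, and 2(a−b)−1 if a+k is odd. -/

import Mathlib

/-!
Put `h(x, y) = 2y - [x + y odd]`. Along every edge `h` changes by exactly one, so a walk from `u`
to the line `L_b` has length at least `h u - 2b`. Conversely, from a vertex with `x + y` even one
descends a row in two steps (right, then down), reaching `L_b` at a vertex with `x + b` even, i.e.
`h = 2b`; from a vertex with `x + y` odd one first steps straight down.
-/

/-- The hexagonal grid in its brick wall representation: vertex set ℤ×ℤ,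
with (x,y) adjacent to (x±1,y) always, and to (x,y+1) if x+y is even
(equivalently, to (x,y-1) if x+y is odd). -/
def hexGraph : SimpleGraph (ℤ × ℤ) where
  Adj u v := (u.2 = v.2 ∧ (u.1 = v.1 + 1 ∨ v.1 = u.1 + 1)) ∨
    (u.1 = v.1 ∧ ((v.2 = u.2 + 1 ∧ Even (u.1 + u.2)) ∨ (u.2 = v.2 + 1 ∧ Even (v.1 + v.2))))
  symm := by
    constructor
    rintro u v (⟨h1, h2 | h2⟩ | ⟨h1, ⟨h2, h3⟩ | ⟨h2, h3⟩⟩)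
    · exact Or.inl ⟨h1.symm, Or.inr h2⟩
    · exact Or.inl ⟨h1.symm, Or.inl h2⟩
    · exact Or.inr ⟨h1.symm, Or.inr ⟨h2, h3⟩⟩
    · exact Or.inr ⟨h1.symm, Or.inl ⟨h2, h3⟩⟩
  loopless := by constructor; rintro ⟨x, y⟩ (⟨_, h | h⟩ | ⟨_, ⟨h, _⟩ | ⟨h, _⟩⟩) <;> omega

/-- The graph distance from a vertex to the horizontal line L_k = {(x,k) : x ∈ ℤ}. -/
noncomputable def hexLineDist (u : ℤ × ℤ) (k : ℤ) : ℕ :=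
  sInf {n : ℕ | ∃ x : ℤ, hexGraph.dist u (x, k) = n}

open SimpleGraph

def hexHeight (u : ℤ × ℤ) : ℤ :=
  2 * u.2 - if Even (u.1 + u.2) then 0 else 1

lemma hexHeight_of_even {x y : ℤ} (h : Even (x + y)) : hexHeight (x, y) = 2 * y := by
  simp [hexHeight, h]

lemma hexHeight_le_of_adj {u v : ℤ × ℤ} (h : hexGraph.Adj u v) :
    hexHeight u ≤ hexHeight v + 1 := by
  obtain ⟨x, y⟩ := u
  obtain ⟨x', y'⟩ := v
  rcases h with ⟨h1, h2 | h2⟩ | ⟨h1, ⟨h2, h3⟩ | ⟨h2, h3⟩⟩ <;>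
    simp only [hexHeight, Int.even_iff] at * <;> split_ifs <;> omega

lemma hexHeight_le_add_length {u v : ℤ × ℤ} (p : hexGraph.Walk u v) :
    hexHeight u ≤ hexHeight v + p.length := by
  induction p with
  | nil => simp
  | cons h _ ih =>
    have := hexHeight_le_of_adj h
    rw [Walk.length_cons]
    omega

lemma hexHeight_sub_le_dist {u v : ℤ × ℤ} (h : hexGraph.Reachable u v) :
    hexHeight u - hexHeight v ≤ hexGraph.dist u v := by
  obtain ⟨p, hp⟩ := h.exists_walk_length_eq_dist
  have := hexHeight_le_add_length p
  omega

lemma hexGraph_adj_right (x y : ℤ) : hexGraph.Adj (x, y) (x + 1, y) :=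
  Or.inl ⟨rfl, Or.inr rfl⟩

lemma hexGraph_adj_down {x y : ℤ} (h : ¬Even (x + y)) : hexGraph.Adj (x, y) (x, y - 1) := by
  refine Or.inr ⟨rfl, Or.inr ⟨by ring, ?_⟩⟩
  rw [Int.even_iff] at *
  omega

lemma hexGraph_reachable_of_snd_eq (x x' y : ℤ) : hexGraph.Reachable (x, y) (x', y) := by
  have from_zero : ∀ t : ℤ, hexGraph.Reachable (0, y) (t, y) := by
    intro t
    induction t using Int.induction_on with
    | zero => rfl
    | succ n ih => exact ih.trans (hexGraph_adj_right n y).reachable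
    | pred n ih =>
      exact ih.trans (by simpa using (hexGraph_adj_right (-(n : ℤ) - 1) y).reachable.symm)
  exact (from_zero x).symm.trans (from_zero x')

lemma exists_walk_to_line_of_even {b y : ℤ} (hby : b ≤ y) :
    ∀ x, Even (x + y) → ∃ x', ∃ p : hexGraph.Walk (x, y) (x', b), (p.length : ℤ) = 2 * (y - b) := by
  induction y, hby using Int.leInduction with
  | base => exact fun x _ ↦ ⟨x, Walk.nil, by simp⟩
  | succ y _ ih =>
    intro x hxy
    have hodd : ¬Even (x + 1 + (y + 1)) := by rw [Int.even_iff] at *; omega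
    obtain ⟨x', p, hp⟩ := ih (x + 1) (by rw [Int.even_iff] at *; omega)
    have hdown := hexGraph_adj_down hodd
    rw [add_sub_cancel_right] at hdown
    refine ⟨x', .cons (hexGraph_adj_right x (y + 1)) (.cons hdown p), ?_⟩
    simp only [Walk.length_cons]
    omega

lemma exists_walk_to_line {a b : ℤ} (hab : b < a) (x : ℤ) :
    ∃ x', ∃ p : hexGraph.Walk (x, a) (x', b), (p.length : ℤ) = hexHeight (x, a) - 2 * b := by
  by_cases hxa : Even (x + a)
  · rw [hexHeight_of_even hxa]
    obtain ⟨x', p, hp⟩ := exists_walk_to_line_of_even hab.le x hxa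
    exact ⟨x', p, by omega⟩
  · obtain ⟨x', p, hp⟩ := exists_walk_to_line_of_even (by omega : b ≤ a - 1) x
      (by rw [Int.even_iff] at *; omega)
    refine ⟨x', .cons (hexGraph_adj_down hxa) p, ?_⟩
    simp only [Walk.length_cons, hexHeight, hxa, if_false]
    omega

lemma hexLineDist_eq {a b : ℤ} (hab : b < a) (x : ℤ) :
    (hexLineDist (x, a) b : ℤ) = hexHeight (x, a) - 2 * b := by
  obtain ⟨x', p, hp⟩ := exists_walk_to_line hab x
  have lower : ∀ x'', hexHeight (x, a) - 2 * b ≤ hexGraph.dist (x, a) (x'', b) := by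
    intro x''
    have := hexHeight_sub_le_dist (p.reachable.trans (hexGraph_reachable_of_snd_eq x' x'' b))
    have : hexHeight (x'', b) ≤ 2 * b := by unfold hexHeight; split_ifs <;> omega
    omega
  have upper : (hexGraph.dist (x, a) (x', b) : ℤ) ≤ p.length := by exact_mod_cast dist_le p
  have least : IsLeast {n : ℕ | ∃ x'', hexGraph.dist (x, a) (x'', b) = n}
      (hexGraph.dist (x, a) (x', b)) := by
    refine ⟨⟨x', rfl⟩, ?_⟩
    rintro _ ⟨x'', rfl⟩
    have := lower x''
    omega
  rw [hexLineDist, least.csInf_eq]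
  have := lower x'
  omega

/-- distance from (k,a) down to the line L_b for a > b. -/
theorem hex_vertex_line_dist_down (a b k : ℤ) (hab : a > b) :
    (hexLineDist (k, a) b : ℤ) = if Even (a + k) then 2 * (a - b) else 2 * (a - b) - 1 := by
  rw [hexLineDist_eq hab, hexHeight, add_comm a k]
  split_ifs <;> ring
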